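/- For all lists e (of length m) and f (of length n), the set of alignments of e and f is nonempty and finite, and δ m n is the minimum alignment cost: every alignment of e and f has cost at least δ m n, and some alignment of e and f has cost exactly δ m n. -/

import Mathlib

/-!
Read from the back of the lists, the recurrence for `δ` is the edit-distance recurrence
`alignDist` read from the front, so `δ i j` is `alignDist` of the reversed prefixes of length
`i` and `j`. An alignment of `a :: e` and `b :: f` starts with a log, model or synchronous move
followed by an alignment of what remains, so induction on the alignment gives the lower bound,
and following a minimising branch of the recurrence builds an alignment attaining it; reversing
alignments transfers both to `e` and `f`. Finiteness holds because an alignment has at most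
`|e| + |f|` moves, each drawn from a finite set.
-/

open scoped NNReal

namespace Stmt0

variable {E F : Type*}

/-- The log projection of a list of moves: first components that are not `none`. -/
def logProj (γ : List (Option E × Option F)) : List E := γ.filterMap Prod.fst

/-- The model projection of a list of moves: second components that are not `none`. -/
def modelProj (γ : List (Option E × Option F)) : List F := γ.filterMap Prod.snd

/-- `γ` is an alignment of `e` and `f`: a list of moves (no `(none, none)` pairs)
whose log projection is `e` and whose model projection is `f`. -/
def IsAlignment (e : List E) (f : List F) (γ : List (Option E × Option F)) : Prop :=
  (∀ mv ∈ γ, mv ≠ (none, none)) ∧ logProj γ = e ∧ modelProj γ = f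

/-- Cost of a single move. -/
def moveCost (PL : E → ℝ≥0) (PM : F → ℝ≥0) (Peq : E → F → ℝ≥0) :
    Option E × Option F → ℝ≥0
  | (some a, none) => PL a
  | (none, some b) => PM b
  | (some a, some b) => Peq a b
  | (none, none) => 0

/-- Cost of an alignment: sum of the costs of its moves. -/
def alignCost (PL : E → ℝ≥0) (PM : F → ℝ≥0) (Peq : E → F → ℝ≥0)
    (γ : List (Option E × Option F)) : ℝ≥0 :=
  (γ.map (moveCost PL PM Peq)).sum

theorem List.finite_setOf_length_le_forall_mem {α : Type*} {s : Set α} (hs : s.Finite) (n : ℕ) :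
    {l : List α | l.length ≤ n ∧ ∀ x ∈ l, x ∈ s}.Finite := by
  have := hs.to_subtype
  refine ((List.finite_length_le s n).image (List.map Subtype.val)).subset ?_
  rintro l ⟨hl, hmem⟩
  exact ⟨l.attach.map fun x => ⟨x.1, hmem x.1 x.2⟩, by simpa using hl, by simp⟩

theorem List.reverse_take_add_one {α : Type*} {l : List α} {i : ℕ} (hi : i < l.length) :
    (l.take (i + 1)).reverse = l[i] :: (l.take i).reverse := by
  rw [List.take_succ_eq_append_getElem hi, List.reverse_append]
  rfl

section Alignment

variable {e : List E} {f : List F} {γ : List (Option E × Option F)}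

@[simp]
theorem isAlignment_nil : IsAlignment e f [] ↔ e = [] ∧ f = [] := by
  simp [IsAlignment, logProj, modelProj, eq_comm]

theorem isAlignment_cons {mv : Option E × Option F} :
    IsAlignment e f (mv :: γ) ↔
      (∃ a e', mv = (some a, none) ∧ e = a :: e' ∧ IsAlignment e' f γ) ∨
      (∃ b f', mv = (none, some b) ∧ f = b :: f' ∧ IsAlignment e f' γ) ∨
      (∃ a e' b f', mv = (some a, some b) ∧ e = a :: e' ∧ f = b :: f' ∧
        IsAlignment e' f' γ) := by
  rcases mv with ⟨_ | a, _ | b⟩ <;> simp [IsAlignment, logProj, modelProj, eq_comm] <;> tauto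

theorem IsAlignment.reverse (h : IsAlignment e f γ) :
    IsAlignment e.reverse f.reverse γ.reverse := by
  obtain ⟨hmoves, rfl, rfl⟩ := h
  exact ⟨fun mv hmv => hmoves mv (List.mem_reverse.mp hmv),
    List.filterMap_reverse .., List.filterMap_reverse ..⟩

theorem IsAlignment.length_le (h : IsAlignment e f γ) : γ.length ≤ e.length + f.length := by
  induction γ generalizing e f with
  | nil => simp
  | cons mv γ ih =>
    rcases isAlignment_cons.mp h with
      ⟨a, e', -, rfl, h'⟩ | ⟨b, f', -, rfl, h'⟩ | ⟨a, e', b, f', -, rfl, rfl, h'⟩ <;>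
    · have := ih h'
      simp only [List.length_cons]
      omega

theorem IsAlignment.mem_moves (h : IsAlignment e f γ) {mv : Option E × Option F}
    (hmv : mv ∈ γ) :
    mv ∈ (insert none (some '' {a | a ∈ e})) ×ˢ (insert none (some '' {b | b ∈ f})) := by
  obtain ⟨-, rfl, rfl⟩ := h
  rcases mv with ⟨_ | a, _ | b⟩ <;> simp [logProj, modelProj] <;> aesop

theorem finite_setOf_isAlignment (e : List E) (f : List F) :
    {γ | IsAlignment e f γ}.Finite := by
  have hmoves : ((insert none (some '' {a | a ∈ e})) ×ˢ
      (insert none (some '' {b | b ∈ f})) : Set (Option E × Option F)).Finite :=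
    ((e.finite_toSet.image _).insert _).prod ((f.finite_toSet.image _).insert _)
  exact (List.finite_setOf_length_le_forall_mem hmoves _).subset
    fun γ h => ⟨h.length_le, fun _ => h.mem_moves⟩

end Alignment

section Cost

variable (PL : E → ℝ≥0) (PM : F → ℝ≥0) (Peq : E → F → ℝ≥0)

@[simp]
theorem alignCost_nil : alignCost PL PM Peq [] = 0 := rfl

@[simp]
theorem alignCost_cons (mv : Option E × Option F) (γ : List (Option E × Option F)) :
    alignCost PL PM Peq (mv :: γ) = moveCost PL PM Peq mv + alignCost PL PM Peq γ := by
  simp [alignCost]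

@[simp]
theorem alignCost_reverse (γ : List (Option E × Option F)) :
    alignCost PL PM Peq γ.reverse = alignCost PL PM Peq γ := by
  simp [alignCost]

noncomputable def alignDist : List E → List F → ℝ≥0
  | [], [] => 0
  | a :: e, [] => PL a + alignDist e []
  | [], b :: f => PM b + alignDist [] f
  | a :: e, b :: f =>
      min (Peq a b + alignDist e f)
        (min (PL a + alignDist e (b :: f)) (PM b + alignDist (a :: e) f))
termination_by e f => e.length + f.length

variable {PL PM Peq}

theorem alignDist_cons_left_le (a : E) (e : List E) (f : List F) :
    alignDist PL PM Peq (a :: e) f ≤ PL a + alignDist PL PM Peq e f := by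
  cases f with
  | nil => rw [alignDist]
  | cons b f => rw [alignDist]; exact (min_le_right _ _).trans (min_le_left _ _)

theorem alignDist_cons_right_le (e : List E) (b : F) (f : List F) :
    alignDist PL PM Peq e (b :: f) ≤ PM b + alignDist PL PM Peq e f := by
  cases e with
  | nil => rw [alignDist]
  | cons a e => rw [alignDist]; exact (min_le_right _ _).trans (min_le_right _ _)

theorem alignDist_cons_cons_le (a : E) (e : List E) (b : F) (f : List F) :
    alignDist PL PM Peq (a :: e) (b :: f) ≤ Peq a b + alignDist PL PM Peq e f := by
  rw [alignDist]
  exact min_le_left _ _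

variable (PL PM Peq)

theorem alignDist_le_alignCost {e : List E} {f : List F} {γ : List (Option E × Option F)}
    (h : IsAlignment e f γ) : alignDist PL PM Peq e f ≤ alignCost PL PM Peq γ := by
  induction γ generalizing e f with
  | nil =>
    obtain ⟨rfl, rfl⟩ := isAlignment_nil.mp h
    simp [alignDist]
  | cons mv γ ih =>
    rcases isAlignment_cons.mp h with
      ⟨a, e, rfl, rfl, h'⟩ | ⟨b, f, rfl, rfl, h'⟩ | ⟨a, e, b, f, rfl, rfl, rfl, h'⟩
    · exact (alignDist_cons_left_le a e f).trans (by simpa [moveCost] using ih h')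
    · exact (alignDist_cons_right_le e b f).trans (by simpa [moveCost] using ih h')
    · exact (alignDist_cons_cons_le a e b f).trans (by simpa [moveCost] using ih h')

theorem exists_isAlignment_alignCost_eq_alignDist :
    ∀ (e : List E) (f : List F),
      ∃ γ, IsAlignment e f γ ∧ alignCost PL PM Peq γ = alignDist PL PM Peq e f
  | [], [] => ⟨[], by simp, by simp [alignDist]⟩
  | a :: e, [] => by
    obtain ⟨γ, hγ, hcost⟩ := exists_isAlignment_alignCost_eq_alignDist e []
    exact ⟨(some a, none) :: γ, by simpa [isAlignment_cons],
      by simp [moveCost, hcost, alignDist]⟩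
  | [], b :: f => by
    obtain ⟨γ, hγ, hcost⟩ := exists_isAlignment_alignCost_eq_alignDist [] f
    exact ⟨(none, some b) :: γ, by simpa [isAlignment_cons],
      by simp [moveCost, hcost, alignDist]⟩
  | a :: e, b :: f => by
    obtain ⟨γs, hγs, hs⟩ := exists_isAlignment_alignCost_eq_alignDist e f
    obtain ⟨γl, hγl, hl⟩ := exists_isAlignment_alignCost_eq_alignDist e (b :: f)
    obtain ⟨γm, hγm, hm⟩ := exists_isAlignment_alignCost_eq_alignDist (a :: e) f
    rw [alignDist]
    rcases min_choice (Peq a b + alignDist PL PM Peq e f)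
        (min (PL a + alignDist PL PM Peq e (b :: f)) (PM b + alignDist PL PM Peq (a :: e) f))
      with hmin | hmin <;> rw [hmin]
    · exact ⟨(some a, some b) :: γs, by simpa [isAlignment_cons], by simp [moveCost, hs]⟩
    rcases min_choice (PL a + alignDist PL PM Peq e (b :: f))
        (PM b + alignDist PL PM Peq (a :: e) f) with hmin | hmin <;> rw [hmin]
    · exact ⟨(some a, none) :: γl, by simpa [isAlignment_cons], by simp [moveCost, hl]⟩
    · exact ⟨(none, some b) :: γm, by simpa [isAlignment_cons], by simp [moveCost, hm]⟩
termination_by e f => e.length + f.length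

end Cost

theorem eq_alignDist_reverse_take {PL : E → ℝ≥0} {PM : F → ℝ≥0} {Peq : E → F → ℝ≥0}
    {e : List E} {f : List F} {δ : ℕ → ℕ → ℝ≥0}
    (h00 : δ 0 0 = 0)
    (hi0 : ∀ i (hi : i < e.length), δ (i + 1) 0 = PL (e[i]'hi) + δ i 0)
    (h0j : ∀ j (hj : j < f.length), δ 0 (j + 1) = PM (f[j]'hj) + δ 0 j)
    (hij : ∀ i j (hi : i < e.length) (hj : j < f.length),
      δ (i + 1) (j + 1) =
        min (Peq (e[i]'hi) (f[j]'hj) + δ i j)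
          (min (PL (e[i]'hi) + δ i (j + 1)) (PM (f[j]'hj) + δ (i + 1) j))) :
    ∀ i j, i ≤ e.length → j ≤ f.length →
      δ i j = alignDist PL PM Peq (e.take i).reverse (f.take j).reverse
  | 0, 0, _, _ => by simpa [alignDist] using h00
  | i + 1, 0, (hi : i < e.length), _ => by
    rw [hi0 i hi, eq_alignDist_reverse_take h00 hi0 h0j hij i 0 hi.le (Nat.zero_le _),
      List.reverse_take_add_one hi]
    simp [alignDist]
  | 0, j + 1, _, (hj : j < f.length) => by
    rw [h0j j hj, eq_alignDist_reverse_take h00 hi0 h0j hij 0 j (Nat.zero_le _) hj.le,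
      List.reverse_take_add_one hj]
    simp [alignDist]
  | i + 1, j + 1, (hi : i < e.length), (hj : j < f.length) => by
    rw [hij i j hi hj, eq_alignDist_reverse_take h00 hi0 h0j hij i j hi.le hj.le,
      eq_alignDist_reverse_take h00 hi0 h0j hij i (j + 1) hi.le hj,
      eq_alignDist_reverse_take h00 hi0 h0j hij (i + 1) j hi hj.le,
      List.reverse_take_add_one hi, List.reverse_take_add_one hj, alignDist]

/-- For lists `e` (of length `m`) and `f` (of length `n`), the set of alignments of `e` and
`f` is nonempty and finite, and `δ m n` (defined by the edit-distance recurrence) is the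
minimum alignment cost: every alignment costs at least `δ m n`, and some alignment costs
exactly `δ m n`. -/
theorem alignment_min_cost
    (PL : E → ℝ≥0) (PM : F → ℝ≥0) (Peq : E → F → ℝ≥0)
    (e : List E) (f : List F)
    (δ : ℕ → ℕ → ℝ≥0)
    (h00 : δ 0 0 = 0)
    (hi0 : ∀ i (hi : i < e.length), δ (i + 1) 0 = PL (e[i]'hi) + δ i 0)
    (h0j : ∀ j (hj : j < f.length), δ 0 (j + 1) = PM (f[j]'hj) + δ 0 j)
    (hij : ∀ i j (hi : i < e.length) (hj : j < f.length),
      δ (i + 1) (j + 1) =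
        min (Peq (e[i]'hi) (f[j]'hj) + δ i j)
          (min (PL (e[i]'hi) + δ i (j + 1)) (PM (f[j]'hj) + δ (i + 1) j))) :
    {γ : List (Option E × Option F) | IsAlignment e f γ}.Nonempty ∧
    {γ : List (Option E × Option F) | IsAlignment e f γ}.Finite ∧
    (∀ γ, IsAlignment e f γ → δ e.length f.length ≤ alignCost PL PM Peq γ) ∧
    (∃ γ, IsAlignment e f γ ∧ alignCost PL PM Peq γ = δ e.length f.length) := by
  have hδ : δ e.length f.length = alignDist PL PM Peq e.reverse f.reverse := by
    simpa using eq_alignDist_reverse_take h00 hi0 h0j hij e.length f.length le_rfl le_rfl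
  obtain ⟨γ, hγ, hcost⟩ :=
    exists_isAlignment_alignCost_eq_alignDist PL PM Peq e.reverse f.reverse
  have hγrev : IsAlignment e f γ.reverse := by simpa using hγ.reverse
  refine ⟨⟨γ.reverse, hγrev⟩, finite_setOf_isAlignment e f, fun γ' hγ' => ?_,
    ⟨γ.reverse, hγrev, by rw [alignCost_reverse, hcost, hδ]⟩⟩
  simpa [hδ] using alignDist_le_alignCost PL PM Peq hγ'.reverse

end Stmt0
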